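/- arXiv:2501.00695 — 2 statements merged into one kernel-verified Lean document; each statement's English description precedes it below -/
import Mathlib

section
/- For all real N×r matrices X and Y, the sum over all pairs (i,j) with 1 ≤ i < j ≤ N of tr(Xᵀ ℰ_{ij}ᵀ Y) · tr(Xᵀ ℰ_{ij} Y) equals −‖𝒜(X Yᵀ)‖²_F. -/
open Matrix BigOperators

/-- `ℰ_{ij} = (√2/2)(E_{ij} − E_{ji})` where `E_{ij}` is the matrix with a `1`
in entry `(i,j)` and `0` elsewhere. -/
noncomputable def calE (N : ℕ) (i j : Fin N) : Matrix (Fin N) (Fin N) ℝ :=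
  (Real.sqrt 2 / 2) • (Matrix.single i j (1 : ℝ) - Matrix.single j i (1 : ℝ))

/-- The Frobenius inner product `⟨A,B⟩_F = tr(Aᵀ B)`. -/
noncomputable def frob {N r : ℕ} (A B : Matrix (Fin N) (Fin r) ℝ) : ℝ := (Aᵀ * B).trace

/-- The skew-symmetrization `𝒜(A) = (A − Aᵀ)/2`. -/
noncomputable def skewPart {N : ℕ} (A : Matrix (Fin N) (Fin N) ℝ) : Matrix (Fin N) (Fin N) ℝ :=
  (1 / 2 : ℝ) • (A - Aᵀ)

/-!
Since `tr(Xᵀ E_{ij} Y) = (XYᵀ)_{ij}`, the trace `tr(Xᵀ ℰ_{ij} Y)` is `√2` times the entry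
`𝒜(XYᵀ)_{ij}`, and `ℰ_{ij}ᵀ = -ℰ_{ij}`; so the `(i,j)` summand is `-2 𝒜(XYᵀ)_{ij}²`.
As `𝒜(XYᵀ)` is skew-symmetric, its squared entries are symmetric in `(i,j)` and vanish on the
diagonal, so `‖𝒜(XYᵀ)‖²_F` is twice their sum over `i < j`.
-/

lemma Finset.sum_sum_eq_two_mul_sum_sum_lt {ι R : Type*} [Fintype ι] [LinearOrder ι]
    [Semiring R] (f : ι → ι → R) (hsymm : ∀ i j, f i j = f j i) (hdiag : ∀ i, f i i = 0) :
    ∑ i, ∑ j, f i j = 2 * ∑ i, ∑ j, if i < j then f i j else 0 := by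
  have hsplit : ∀ i j, f i j = (if i < j then f i j else 0) + if j < i then f j i else 0 := by
    intro i j
    rcases lt_trichotomy i j with h | rfl | h
    · simp [h, h.not_gt]
    · simp [hdiag]
    · simp [h, h.not_gt, hsymm i j]
  calc ∑ i, ∑ j, f i j
      = ∑ i, ∑ j, ((if i < j then f i j else 0) + if j < i then f j i else 0) :=
        Finset.sum_congr rfl fun i _ => Finset.sum_congr rfl fun j _ => hsplit i j
    _ = (∑ i, ∑ j, if i < j then f i j else 0) + ∑ i, ∑ j, if j < i then f j i else 0 := by
        simp only [Finset.sum_add_distrib]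
    _ = 2 * ∑ i, ∑ j, if i < j then f i j else 0 := by
        rw [Finset.sum_comm (f := fun i j => if j < i then f j i else 0), two_mul]

lemma trace_transpose_mul_single_mul {l m n R : Type*} [Fintype l] [Fintype m] [Fintype n]
    [DecidableEq l] [DecidableEq m] [CommSemiring R]
    (X : Matrix l n R) (Y : Matrix m n R) (i : l) (j : m) :
    (Xᵀ * single i j (1 : R) * Y).trace = (X * Yᵀ) i j := by
  rw [Matrix.mul_assoc, trace_mul_comm, Matrix.mul_assoc, trace_single_mul, one_smul,
    ← transpose_apply (X * Yᵀ), transpose_mul, transpose_transpose]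

lemma calE_transpose (N : ℕ) (i j : Fin N) : (calE N i j)ᵀ = -calE N i j := by
  simp only [calE, transpose_smul, transpose_sub, transpose_single, ← smul_neg, neg_sub]

lemma skewPart_apply {N : ℕ} (A : Matrix (Fin N) (Fin N) ℝ) (i j : Fin N) :
    skewPart A i j = (A i j - A j i) / 2 := by
  simp only [skewPart, Matrix.smul_apply, Matrix.sub_apply, transpose_apply, smul_eq_mul]
  ring

lemma skewPart_apply_swap {N : ℕ} (A : Matrix (Fin N) (Fin N) ℝ) (i j : Fin N) :
    skewPart A j i = -skewPart A i j := by
  simp only [skewPart_apply]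
  ring

lemma skewPart_apply_self {N : ℕ} (A : Matrix (Fin N) (Fin N) ℝ) (i : Fin N) :
    skewPart A i i = 0 := by
  simp [skewPart_apply]

lemma trace_transpose_mul_calE_mul {N r : ℕ} (X Y : Matrix (Fin N) (Fin r) ℝ) (i j : Fin N) :
    (Xᵀ * calE N i j * Y).trace = Real.sqrt 2 * skewPart (X * Yᵀ) i j := by
  simp only [calE, Matrix.mul_smul, Matrix.smul_mul, Matrix.mul_sub, Matrix.sub_mul, trace_smul,
    trace_sub, trace_transpose_mul_single_mul, skewPart_apply, smul_eq_mul]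
  ring

lemma frob_self_eq_sum_sq {N r : ℕ} (A : Matrix (Fin N) (Fin r) ℝ) :
    frob A A = ∑ i, ∑ k, A i k ^ 2 := by
  simp only [frob, trace, diag_apply, mul_apply, transpose_apply, sq]
  exact Finset.sum_comm

theorem stmt_7 (N r : ℕ) (X Y : Matrix (Fin N) (Fin r) ℝ) :
    ∑ i : Fin N, ∑ j : Fin N,
      (if i < j then
        (Xᵀ * (calE N i j)ᵀ * Y).trace * (Xᵀ * (calE N i j) * Y).trace
      else 0)
      = -frob (skewPart (X * Yᵀ)) (skewPart (X * Yᵀ)) := by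
  have hsummand : ∀ i j, (Xᵀ * (calE N i j)ᵀ * Y).trace * (Xᵀ * calE N i j * Y).trace
      = -2 * skewPart (X * Yᵀ) i j ^ 2 := by
    intro i j
    rw [calE_transpose, Matrix.mul_neg, Matrix.neg_mul, trace_neg, trace_transpose_mul_calE_mul]
    linear_combination -skewPart (X * Yᵀ) i j ^ 2 * Real.sq_sqrt (zero_le_two (α := ℝ))
  rw [frob_self_eq_sum_sq,
    Finset.sum_sum_eq_two_mul_sum_sum_lt (fun i j => skewPart (X * Yᵀ) i j ^ 2)
      (fun i j => by rw [skewPart_apply_swap, neg_sq]) (fun i => by simp [skewPart_apply_self])]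
  simp only [hsummand, Finset.mul_sum, neg_mul, ← Finset.sum_neg_distrib]
  exact Finset.sum_congr rfl fun i _ => Finset.sum_congr rfl fun j _ => by split_ifs <;> simp
end

section
/- Let ψ : ℝ → ℝ be twice continuously differentiable, and let X, Y ∈ ℝ^{N×N} be symmetric positive definite matrices. For each pair (i,j) with 1 ≤ i ≤ N, 1 ≤ j ≤ N define f_{ij}(t,t') := ψ(‖exp(t·E_{ij})ᵀ X exp(t·E_{ij}) − exp(t'·E_{ij})ᵀ Y exp(t'·E_{ij})‖²_F), where exp is the matrix exponential. Then the sum over all pairs (i,j) of the mixed partial derivative −∂²f_{ij}/∂t∂t' evaluated at (t,t') = (0,0) equals 4(N+1)·ψ'(‖X−Y‖²_F)·tr(XY) + 16·ψ''(‖X−Y‖²_F)·⟨X(X−Y), Y(X−Y)⟩_F. -/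
open Matrix BigOperators

/-- The `N × N` matrix with a `1` in entry `(i,j)` and `0` elsewhere. -/
def Eb (N : ℕ) (i j : Fin N) : Matrix (Fin N) (Fin N) ℝ :=
  Matrix.single i j 1

/-- The squared Frobenius norm `‖A‖²_F = ⟨A,A⟩_F`. -/
noncomputable def frobSq {N r : ℕ} (A : Matrix (Fin N) (Fin r) ℝ) : ℝ := frob A A

/-!
Along the congruence curves `c_A(t) = exp(tE)ᵀ A exp(tE)`, `E = E_{ij}`, whose velocity at `0` is
`Ȧ = Eᵀ A + A E`, we have `f_{ij}(t,t') = ψ(‖c_X(t) - c_Y(t')‖²_F)`, so the chain and product rules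
give `-∂²f_{ij}/∂t∂t'(0,0) = 4ψ''·⟨X-Y, Ẋ⟩_F⟨X-Y, Ẏ⟩_F + 2ψ'·⟨Ẋ, Ẏ⟩_F`. For symmetric `S, A`
one has `⟨S, Ȧ⟩_F = 2 (A S)_{ij}`, and summing over `(i,j)` gives
`Σ ⟨Ẋ, Ẏ⟩_F = 2 (N + 1) tr(XY)`.
-/

section Frobenius

variable {m n : ℕ}

lemma frob_eq_sum (A B : Matrix (Fin m) (Fin n) ℝ) : frob A B = ∑ k, ∑ l, A k l * B k l := by
  simp only [frob, trace, diag, mul_apply, transpose_apply]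
  exact Finset.sum_comm

lemma frob_comm (A B : Matrix (Fin m) (Fin n) ℝ) : frob A B = frob B A := by
  simp only [frob_eq_sum, mul_comm]

lemma frob_neg_right (A B : Matrix (Fin m) (Fin n) ℝ) : frob A (-B) = -frob A B := by
  simp [frob]

lemma frob_of_isSymm {A : Matrix (Fin m) (Fin m) ℝ} (hA : A.IsSymm) (B : Matrix (Fin m) (Fin m) ℝ) :
    frob A B = (A * B).trace := by
  rw [frob, hA.eq]

end Frobenius

section Derivatives

-- Matrices carry no global norm; derivatives do not depend on the choice, and this one makes
-- matrices a normed algebra, as `hasDerivAt_exp_smul_const` requires.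
attribute [local instance] Matrix.linftyOpNormedAddCommGroup Matrix.linftyOpNormedRing
  Matrix.linftyOpNormedAlgebra

variable {N : ℕ} {c d : ℝ → Matrix (Fin N) (Fin N) ℝ} {c' d' : Matrix (Fin N) (Fin N) ℝ} {t : ℝ}

lemma HasDerivAt.matrix_transpose (hc : HasDerivAt c c' t) :
    HasDerivAt (fun s => (c s)ᵀ) c'ᵀ t :=
  ((transposeLinearEquiv (Fin N) (Fin N) ℝ ℝ).toLinearMap.toContinuousLinearMap.hasFDerivAt
    ).comp_hasDerivAt t hc

lemma HasDerivAt.frob (hc : HasDerivAt c c' t) (hd : HasDerivAt d d' t) :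
    HasDerivAt (fun s => _root_.frob (c s) (d s)) (_root_.frob c' (d t) + _root_.frob (c t) d') t :=
  (((traceLinearMap (Fin N) ℝ ℝ).toContinuousLinearMap.hasFDerivAt).comp_hasDerivAt t
    (hc.matrix_transpose.mul hd)).congr_deriv (trace_add (c'ᵀ * d t) ((c t)ᵀ * d'))

lemma HasDerivAt.frobSq (hc : HasDerivAt c c' t) :
    HasDerivAt (fun s => _root_.frobSq (c s)) (2 * _root_.frob (c t) c') t :=
  (hc.frob hc).congr_deriv (by rw [frob_comm]; ring)

lemma hasDerivAt_transpose_exp_mul_mul_exp (E A : Matrix (Fin N) (Fin N) ℝ) :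
    HasDerivAt (fun t : ℝ => (NormedSpace.exp (t • E))ᵀ * A * NormedSpace.exp (t • E))
      (Eᵀ * A + A * E) 0 := by
  have hexp : HasDerivAt (fun t : ℝ => NormedSpace.exp (t • E)) E 0 := by
    have h := hasDerivAt_exp_smul_const (𝕂 := ℝ) E 0
    simp only [zero_smul, NormedSpace.exp_zero, one_mul] at h
    exact h
  have h := (hexp.matrix_transpose.mul_const A).mul hexp
  simp only [zero_smul, NormedSpace.exp_zero, transpose_one, one_mul, mul_one] at h
  exact h

lemma neg_deriv_deriv_comp_frobSq_sub {ψ : ℝ → ℝ} (hψ : Differentiable ℝ ψ)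
    {cX cY : ℝ → Matrix (Fin N) (Fin N) ℝ} {DX DY : Matrix (Fin N) (Fin N) ℝ}
    (hψ' : DifferentiableAt ℝ (deriv ψ) (frobSq (cX 0 - cY 0)))
    (hX : HasDerivAt cX DX 0) (hY : HasDerivAt cY DY 0) :
    -deriv (fun t => deriv (fun t' => ψ (frobSq (cX t - cY t'))) 0) 0
      = 4 * deriv (deriv ψ) (frobSq (cX 0 - cY 0)) * frob (cX 0 - cY 0) DX * frob (cX 0 - cY 0) DY
        + 2 * deriv ψ (frobSq (cX 0 - cY 0)) * frob DX DY := by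
  have inner : ∀ t, deriv (fun t' => ψ (frobSq (cX t - cY t'))) 0
      = deriv ψ (frobSq (cX t - cY 0)) * (2 * frob (cX t - cY 0) (-DY)) :=
    fun t => ((hψ _).hasDerivAt.comp 0 (hY.const_sub (cX t)).frobSq).deriv
  have hD := hX.sub_const (cY 0)
  have outer : HasDerivAt (fun t => deriv ψ (frobSq (cX t - cY 0)) * (2 * frob (cX t - cY 0) (-DY)))
      (deriv (deriv ψ) (frobSq (cX 0 - cY 0)) * (2 * frob (cX 0 - cY 0) DX)
          * (2 * frob (cX 0 - cY 0) (-DY))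
        + deriv ψ (frobSq (cX 0 - cY 0)) * (2 * (frob DX (-DY) + frob (cX 0 - cY 0) 0))) 0 :=
    (hψ'.hasDerivAt.comp 0 hD.frobSq).mul ((hD.frob (hasDerivAt_const 0 (-DY))).const_mul 2)
  simp only [inner]
  rw [outer.deriv]
  simp only [frob_neg_right, frob_eq_sum (cX 0 - cY 0) 0, Matrix.zero_apply, mul_zero,
    Finset.sum_const_zero]
  ring

end Derivatives

section ElementaryMatrices

variable {N : ℕ}

lemma frob_transpose_Eb_mul_add_mul_Eb {S A : Matrix (Fin N) (Fin N) ℝ} (hS : S.IsSymm)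
    (hA : A.IsSymm) (i j : Fin N) :
    frob S ((Eb N i j)ᵀ * A + A * Eb N i j) = 2 * (A * S) i j := by
  have hSA : (S * A) j i = (A * S) i j := by
    rw [← transpose_apply (S * A), transpose_mul, hS.eq, hA.eq]
  rw [frob_of_isSymm hS, Eb, transpose_single, mul_add, trace_add, trace_mul_comm S, mul_assoc,
    ← mul_assoc S, trace_single_mul, trace_mul_single, hSA, one_smul, MulOpposite.op_one, one_smul,
    two_mul]

lemma frob_transpose_Eb_mul_add_mul_Eb_pair {X : Matrix (Fin N) (Fin N) ℝ} (hX : X.IsSymm)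
    (Y : Matrix (Fin N) (Fin N) ℝ) (i j : Fin N) :
    frob ((Eb N i j)ᵀ * X + X * Eb N i j) ((Eb N i j)ᵀ * Y + Y * Eb N i j)
      = (Y * X) i i + X j i * Y j i + X i j * Y i j + (X * Y) i i := by
  rw [frob, transpose_add, transpose_mul, transpose_mul, transpose_transpose, hX.eq, Eb,
    transpose_single]
  simp only [add_mul, mul_add, trace_add, ← mul_assoc]
  rw [mul_assoc X, single_mul_single_same, trace_mul_comm, ← mul_assoc, trace_mul_single,
    trace_mul_cycle (X * _), ← mul_assoc, single_mul_mul_single, trace_single_mul,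
    single_mul_mul_single, trace_single_mul, mul_assoc _ X, single_mul_mul_single,
    trace_single_eq_same]
  simp only [mul_one, one_mul, smul_eq_mul, MulOpposite.op_one, one_smul]
  ring

lemma sum_frob_transpose_Eb_mul_add_mul_Eb {X Y : Matrix (Fin N) (Fin N) ℝ} (hX : X.IsSymm) :
    ∑ i, ∑ j, frob ((Eb N i j)ᵀ * X + X * Eb N i j) ((Eb N i j)ᵀ * Y + Y * Eb N i j)
      = 2 * ((N : ℝ) + 1) * (X * Y).trace := by
  simp only [frob_transpose_Eb_mul_add_mul_Eb_pair hX, Finset.sum_add_distrib, Finset.sum_const,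
    Finset.card_univ, Fintype.card_fin, nsmul_eq_mul, ← Finset.mul_sum]
  rw [Finset.sum_comm (f := fun i j => X j i * Y j i), ← frob_eq_sum, frob_of_isSymm hX,
    show ∑ i, (Y * X) i i = (X * Y).trace from trace_mul_comm Y X,
    show ∑ i, (X * Y) i i = (X * Y).trace from rfl]
  ring

end ElementaryMatrices

theorem stmt_16 (N : ℕ) (ψ : ℝ → ℝ) (hψ : ContDiff ℝ 2 ψ)
    (X Y : Matrix (Fin N) (Fin N) ℝ)
    (hX : X.PosDef) (hY : Y.PosDef)
    (f : Fin N → Fin N → ℝ → ℝ → ℝ)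
    (hf : ∀ i j t t', f i j t t' =
      ψ (frobSq ((NormedSpace.exp (t • Eb N i j))ᵀ * X * NormedSpace.exp (t • Eb N i j) -
                 (NormedSpace.exp (t' • Eb N i j))ᵀ * Y * NormedSpace.exp (t' • Eb N i j)))) :
    ∑ i : Fin N, ∑ j : Fin N,
      -(deriv (fun t => deriv (fun t' => f i j t t') 0) 0)
      = 4 * ((N : ℝ) + 1) * deriv ψ (frobSq (X - Y)) * (X * Y).trace
        + 16 * deriv (deriv ψ) (frobSq (X - Y)) * frob (X * (X - Y)) (Y * (X - Y)) := by
  have hXs : X.IsSymm := isHermitian_iff_isSymm.mp hX.isHermitian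
  have hYs : Y.IsSymm := isHermitian_iff_isSymm.mp hY.isHermitian
  have hXYs : (X - Y).IsSymm := hXs.sub hYs
  have term : ∀ i j, -(deriv (fun t => deriv (fun t' => f i j t t') 0) 0)
      = 16 * deriv (deriv ψ) (frobSq (X - Y)) * ((X * (X - Y)) i j * (Y * (X - Y)) i j)
        + 2 * deriv ψ (frobSq (X - Y)) *
          frob ((Eb N i j)ᵀ * X + X * Eb N i j) ((Eb N i j)ᵀ * Y + Y * Eb N i j) := by
    intro i j
    simp only [hf]
    rw [neg_deriv_deriv_comp_frobSq_sub (hψ.differentiable (by norm_num))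
      (hψ.differentiable_deriv_two _)
      (hasDerivAt_transpose_exp_mul_mul_exp _ X) (hasDerivAt_transpose_exp_mul_mul_exp _ Y)]
    simp only [zero_smul, NormedSpace.exp_zero, transpose_one, one_mul, mul_one,
      frob_transpose_Eb_mul_add_mul_Eb hXYs hXs, frob_transpose_Eb_mul_add_mul_Eb hXYs hYs]
    ring
  simp only [term, Finset.sum_add_distrib, ← Finset.mul_sum,
    sum_frob_transpose_Eb_mul_add_mul_Eb hXs, frob_eq_sum (X * (X - Y))]
  ring
end
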